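/- arXiv:1409.7458 — 2 statements merged into one kernel-verified Lean document; each statement's English description precedes it below -/
import Mathlib

section
/- For all S ≥ 2 and n ≥ 1, the minimax mean-squared-error risks satisfy R_I(S,n) ≤ 3 · ( 2·R_H(S,n) + R_H(S²,n) ), where R_I(S,n) is the minimax risk for estimating the mutual information of a joint pmf on [S]×[S] from n i.i.d. pair samples, and R_H(m,n) is the minimax risk for estimating the entropy of a pmf on an alphabet of size m from n i.i.d. samples. -/
/-- Shannon entropy of a pmf `P` on a finite alphabet, with natural logarithm and the
convention `0 ln 0 = 0`. -/
noncomputable def entropy {A : Type*} [Fintype A] (P : A → ℝ) : ℝ :=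
  ∑ a, -(P a * Real.log (P a))

/-- Mutual information of a joint pmf `P` on `A × B`: `I(P) = H(P1) + H(P2) − H(P)`. -/
noncomputable def mutualInfo {A B : Type*} [Fintype A] [Fintype B] (P : A × B → ℝ) : ℝ :=
  entropy (fun a => ∑ b, P (a, b)) + entropy (fun b => ∑ a, P (a, b)) - entropy P

/-- Expectation of `f(W^n)` when `W^n = (W_1,…,W_n)` is drawn i.i.d. from the pmf `P`. -/
noncomputable def expectIID {A : Type*} [Fintype A] {n : ℕ} (P : A → ℝ)
    (f : (Fin n → A) → ℝ) : ℝ :=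
  ∑ w : Fin n → A, (∏ k, P (w k)) * f w

/-- `P` is a probability mass function on the finite alphabet `A`. -/
def IsPmf {A : Type*} [Fintype A] (P : A → ℝ) : Prop :=
  (∀ a, 0 ≤ P a) ∧ ∑ a, P a = 1

/-- Minimax mean-squared-error risk for estimating the entropy of a pmf on the alphabet `A`
from `n` i.i.d. samples. -/
noncomputable def entropyRisk (A : Type*) [Fintype A] (n : ℕ) : ℝ :=
  ⨅ f : (Fin n → A) → ℝ, ⨆ Q : {Q : A → ℝ // IsPmf Q},
    expectIID Q.1 (fun w => (f w - entropy Q.1) ^ 2)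

/-- Minimax mean-squared-error risk for estimating the mutual information of a joint pmf on
`[S] × [S]` from `n` i.i.d. pair samples. -/
noncomputable def miRisk (S n : ℕ) : ℝ :=
  ⨅ f : (Fin n → Fin S × Fin S) → ℝ, ⨆ P : {P : Fin S × Fin S → ℝ // IsPmf P},
    expectIID P.1 (fun z => (f z - mutualInfo P.1) ^ 2)

/- ### Auxiliary lemmas -/

section Aux

variable {A B : Type*} [Fintype A] [Fintype B] {n : ℕ}

lemma sum_prod_eq_one {P : A → ℝ} (h : ∑ a, P a = 1) :
    ∑ w : Fin n → A, ∏ k, P (w k) = 1 := by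
  classical
  have := Finset.prod_univ_sum (fun _ : Fin n => (Finset.univ : Finset A))
    (fun _ a => P a)
  rw [Fintype.piFinset_univ] at this
  rw [← this]
  simp [h]

lemma expect_mono {P : A → ℝ} (hP : ∀ a, 0 ≤ P a) {u v : (Fin n → A) → ℝ}
    (h : ∀ w, u w ≤ v w) : expectIID P u ≤ expectIID P v := by
  refine Finset.sum_le_sum fun w _ => ?_
  exact mul_le_mul_of_nonneg_left (h w) (Finset.prod_nonneg fun k _ => hP (w k))

lemma expect_nonneg {P : A → ℝ} (hP : ∀ a, 0 ≤ P a) {u : (Fin n → A) → ℝ}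
    (h : ∀ w, 0 ≤ u w) : 0 ≤ expectIID P u := by
  refine Finset.sum_nonneg fun w _ => ?_
  exact mul_nonneg (Finset.prod_nonneg fun k _ => hP (w k)) (h w)

lemma expect_le_const {P : A → ℝ} (hP : IsPmf P) {u : (Fin n → A) → ℝ} {M : ℝ}
    (h : ∀ w, u w ≤ M) : expectIID P u ≤ M := by
  calc expectIID P u ≤ expectIID P (fun _ => M) := expect_mono hP.1 h
  _ = M := by
      unfold expectIID
      rw [← Finset.sum_mul, sum_prod_eq_one hP.2, one_mul]

lemma expect_three (P : A → ℝ) (u v t : (Fin n → A) → ℝ) :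
    expectIID P (fun w => 3 * (u w + v w + t w)) =
      3 * (expectIID P u + expectIID P v + expectIID P t) := by
  unfold expectIID
  rw [← Finset.sum_add_distrib, ← Finset.sum_add_distrib, Finset.mul_sum]
  congr 1; ext w; ring

/-- Sum over pair sequences factors through the two coordinate sequences. -/
lemma expect_fst (P : A × B → ℝ) (h : (Fin n → A) → ℝ) :
    expectIID P (fun z => h (fun k => (z k).1)) =
      expectIID (fun a => ∑ b, P (a, b)) h := by
  classical
  unfold expectIID
  let e : ((Fin n → A) × (Fin n → B)) ≃ (Fin n → A × B) :=
    { toFun := fun p k => (p.1 k, p.2 k)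
      invFun := fun z => (fun k => (z k).1, fun k => (z k).2)
      left_inv := fun p => rfl
      right_inv := fun z => rfl }
  rw [← e.sum_comp]
  rw [Fintype.sum_prod_type]
  refine Finset.sum_congr rfl fun u _ => ?_
  have hsummand : ∀ v : Fin n → B,
      (∏ k, P (e (u, v) k)) * h (fun k => (e (u, v) k).1) =
        (∏ k, P (u k, v k)) * h u := fun v => rfl
  simp only [hsummand]
  have key : ∑ v : Fin n → B, ∏ k, P (u k, v k) = ∏ k, ∑ b, P (u k, b) := by
    have := Finset.prod_univ_sum (fun _ : Fin n => (Finset.univ : Finset B))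
      (fun k b => P (u k, b))
    rw [Fintype.piFinset_univ] at this
    exact this.symm
  rw [← Finset.sum_mul, key]

lemma expect_snd (P : A × B → ℝ) (h : (Fin n → B) → ℝ) :
    expectIID P (fun z => h (fun k => (z k).2)) =
      expectIID (fun b => ∑ a, P (a, b)) h := by
  classical
  unfold expectIID
  let e : ((Fin n → B) × (Fin n → A)) ≃ (Fin n → A × B) :=
    { toFun := fun p k => (p.2 k, p.1 k)
      invFun := fun z => (fun k => (z k).2, fun k => (z k).1)
      left_inv := fun p => rfl
      right_inv := fun z => rfl }
  rw [← e.sum_comp]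
  rw [Fintype.sum_prod_type]
  refine Finset.sum_congr rfl fun u _ => ?_
  have hsummand : ∀ v : Fin n → A,
      (∏ k, P (e (u, v) k)) * h (fun k => (e (u, v) k).2) =
        (∏ k, P (v k, u k)) * h u := fun v => rfl
  simp only [hsummand]
  have key : ∑ v : Fin n → A, ∏ k, P (v k, u k) = ∏ k, ∑ a, P (a, u k) := by
    have := Finset.prod_univ_sum (fun _ : Fin n => (Finset.univ : Finset A))
      (fun k a => P (a, u k))
    rw [Fintype.piFinset_univ] at this
    exact this.symm
  rw [← Finset.sum_mul, key]

lemma isPmf_fst {P : A × B → ℝ} (hP : IsPmf P) :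
    IsPmf (fun a => ∑ b, P (a, b)) := by
  constructor
  · exact fun a => Finset.sum_nonneg fun b _ => hP.1 (a, b)
  · rw [← Fintype.sum_prod_type]; exact hP.2

lemma isPmf_snd {P : A × B → ℝ} (hP : IsPmf P) :
    IsPmf (fun b => ∑ a, P (a, b)) := by
  constructor
  · exact fun b => Finset.sum_nonneg fun a _ => hP.1 (a, b)
  · rw [Finset.sum_comm' (s := Finset.univ) (t := fun _ => Finset.univ)
      (t' := Finset.univ) (s' := fun _ => Finset.univ) (by simp)]
    rw [← Fintype.sum_prod_type]; exact hP.2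

lemma pmf_le_one {P : A → ℝ} (hP : IsPmf P) (a : A) : P a ≤ 1 := by
  rw [← hP.2]
  exact Finset.single_le_sum (fun b _ => hP.1 b) (Finset.mem_univ a)

lemma entropy_nonneg {P : A → ℝ} (hP : IsPmf P) : 0 ≤ entropy P := by
  refine Finset.sum_nonneg fun a _ => ?_
  have h0 := hP.1 a
  have h1 := pmf_le_one hP a
  have : Real.log (P a) ≤ 0 := Real.log_nonpos h0 h1
  nlinarith

lemma entropy_le_card {P : A → ℝ} (hP : IsPmf P) :
    entropy P ≤ (Fintype.card A : ℝ) := by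
  have : entropy P ≤ ∑ _a : A, (1 : ℝ) := by
    refine Finset.sum_le_sum fun a _ => ?_
    rcases eq_or_lt_of_le (hP.1 a) with h | h
    · simp [← h]
    · have hlog : 1 - (P a)⁻¹ ≤ Real.log (P a) :=
        Real.one_sub_inv_le_log_of_pos h
      have : P a * (1 - (P a)⁻¹) ≤ P a * Real.log (P a) :=
        mul_le_mul_of_nonneg_left hlog (le_of_lt h)
      have hinv : P a * (P a)⁻¹ = 1 := mul_inv_cancel₀ (ne_of_gt h)
      nlinarith
  simpa using this

lemma bddAbove_risk (f : (Fin n → A) → ℝ) :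
    BddAbove (Set.range fun Q : {Q : A → ℝ // IsPmf Q} =>
      expectIID Q.1 fun w => (f w - entropy Q.1) ^ 2) := by
  classical
  set C : ℝ := ∑ w : Fin n → A, |f w| with hC
  refine ⟨(C + Fintype.card A) ^ 2, ?_⟩
  rintro x ⟨Q, rfl⟩
  refine expect_le_const Q.2 fun w => ?_
  have hfw : |f w| ≤ C := by
    rw [hC]
    exact Finset.single_le_sum (fun v _ => abs_nonneg (f v)) (Finset.mem_univ w)
  have h0 : 0 ≤ entropy Q.1 := entropy_nonneg Q.2
  have h1 : entropy Q.1 ≤ (Fintype.card A : ℝ) := entropy_le_card Q.2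
  have habs : |f w - entropy Q.1| ≤ C + Fintype.card A := by
    have := abs_sub_abs_le_abs_sub (f w) (entropy Q.1)
    have h2 : |f w - entropy Q.1| ≤ |f w| + |entropy Q.1| := abs_sub (f w) (entropy Q.1)
    rw [abs_of_nonneg h0] at h2
    linarith
  calc (f w - entropy Q.1) ^ 2 = |f w - entropy Q.1| ^ 2 := (sq_abs _).symm
  _ ≤ (C + Fintype.card A) ^ 2 := by
      have hnn : (0:ℝ) ≤ |f w - entropy Q.1| := abs_nonneg _
      nlinarith

/-- The uniform pmf exists on a nonempty finite alphabet. -/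
lemma nonempty_pmf [Nonempty A] : Nonempty {Q : A → ℝ // IsPmf Q} := by
  classical
  refine ⟨⟨fun _ => (Fintype.card A : ℝ)⁻¹, ?_, ?_⟩⟩
  · intro a
    positivity
  · rw [Finset.sum_const, Finset.card_univ, nsmul_eq_mul]
    have : (Fintype.card A : ℝ) ≠ 0 := by
      exact_mod_cast Fintype.card_ne_zero
    field_simp

end Aux

/-- `R_I(S,n) ≤ 3 (2 R_H(S,n) + R_H(S²,n))`, identifying the alphabet of size `S²` with
`[S] × [S]`. -/
theorem miRisk_le_three_mul (S n : ℕ) (hS : 2 ≤ S) (hn : 1 ≤ n) :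
    miRisk S n ≤ 3 * (2 * entropyRisk (Fin S) n + entropyRisk (Fin S × Fin S) n) := by
  classical
  have hS0 : 0 < S := by omega
  haveI : NeZero S := ⟨by omega⟩
  haveI hne1 : Nonempty {Q : Fin S → ℝ // IsPmf Q} := nonempty_pmf
  haveI hne2 : Nonempty {P : Fin S × Fin S → ℝ // IsPmf P} := nonempty_pmf
  refine le_of_forall_pos_le_add fun ε hε => ?_
  set R1 := entropyRisk (Fin S) n with hR1
  set R2 := entropyRisk (Fin S × Fin S) n with hR2
  set δ := ε / 9 with hδ
  have hδ0 : 0 < δ := by positivity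
  -- pick near-optimal entropy estimators
  obtain ⟨f1, hf1⟩ : ∃ f : (Fin n → Fin S) → ℝ,
      (⨆ Q : {Q : Fin S → ℝ // IsPmf Q},
        expectIID Q.1 (fun w => (f w - entropy Q.1) ^ 2)) < R1 + δ := by
    apply exists_lt_of_ciInf_lt
    rw [hR1]; unfold entropyRisk
    linarith
  obtain ⟨f2, hf2⟩ : ∃ f : (Fin n → Fin S × Fin S) → ℝ,
      (⨆ P : {P : Fin S × Fin S → ℝ // IsPmf P},
        expectIID P.1 (fun z => (f z - entropy P.1) ^ 2)) < R2 + δ := by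
    apply exists_lt_of_ciInf_lt
    rw [hR2]; unfold entropyRisk
    linarith
  -- the mutual information estimator
  set g : (Fin n → Fin S × Fin S) → ℝ :=
    fun z => f1 (fun k => (z k).1) + f1 (fun k => (z k).2) - f2 z with hg
  have hbdd : BddBelow (Set.range fun f : (Fin n → Fin S × Fin S) → ℝ =>
      ⨆ P : {P : Fin S × Fin S → ℝ // IsPmf P},
        expectIID P.1 (fun z => (f z - mutualInfo P.1) ^ 2)) := by
    refine ⟨0, ?_⟩
    rintro x ⟨f, rfl⟩
    exact Real.iSup_nonneg fun P => expect_nonneg P.2.1 fun z => sq_nonneg _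
  have step1 : miRisk S n ≤ ⨆ P : {P : Fin S × Fin S → ℝ // IsPmf P},
      expectIID P.1 (fun z => (g z - mutualInfo P.1) ^ 2) := ciInf_le hbdd g
  have step2 : (⨆ P : {P : Fin S × Fin S → ℝ // IsPmf P},
      expectIID P.1 (fun z => (g z - mutualInfo P.1) ^ 2)) ≤
      3 * (2 * (R1 + δ) + (R2 + δ)) := by
    refine ciSup_le fun P => ?_
    set P1 : Fin S → ℝ := fun a => ∑ b, P.1 (a, b) with hP1
    set P2 : Fin S → ℝ := fun b => ∑ a, P.1 (a, b) with hP2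
    have hP1pmf : IsPmf P1 := isPmf_fst P.2
    have hP2pmf : IsPmf P2 := isPmf_snd P.2
    set u : (Fin n → Fin S × Fin S) → ℝ :=
      fun z => (f1 (fun k => (z k).1) - entropy P1) ^ 2 with hu
    set v : (Fin n → Fin S × Fin S) → ℝ :=
      fun z => (f1 (fun k => (z k).2) - entropy P2) ^ 2 with hv
    set t : (Fin n → Fin S × Fin S) → ℝ :=
      fun z => (f2 z - entropy P.1) ^ 2 with ht
    have hpt : ∀ z, (g z - mutualInfo P.1) ^ 2 ≤ 3 * (u z + v z + t z) := by
      intro z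
      rw [hg, hu, hv, ht]
      simp only [mutualInfo]
      set a := f1 (fun k => (z k).1) - entropy P1
      set b := f1 (fun k => (z k).2) - entropy P2
      set c := entropy P.1 - f2 z
      have : f1 (fun k => (z k).1) + f1 (fun k => (z k).2) - f2 z -
          (entropy (fun a => ∑ b, P.1 (a, b)) + entropy (fun b => ∑ a, P.1 (a, b))
            - entropy P.1) = a + b + c := by
        rw [← hP1, ← hP2]; ring
      rw [this]
      have hc2 : c ^ 2 = (f2 z - entropy P.1) ^ 2 := by ring
      rw [← hc2]
      nlinarith [sq_nonneg (a - b), sq_nonneg (a - c), sq_nonneg (b - c)]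
    have hmono : expectIID P.1 (fun z => (g z - mutualInfo P.1) ^ 2) ≤
        expectIID P.1 (fun z => 3 * (u z + v z + t z)) :=
      expect_mono P.2.1 hpt
    rw [expect_three] at hmono
    have hEu : expectIID P.1 u ≤ R1 + δ := by
      have heq : expectIID P.1 u =
          expectIID P1 (fun w => (f1 w - entropy P1) ^ 2) :=
        expect_fst P.1 (fun w => (f1 w - entropy P1) ^ 2)
      rw [heq]
      have := le_ciSup (bddAbove_risk f1) (⟨P1, hP1pmf⟩ : {Q : Fin S → ℝ // IsPmf Q})
      exact le_of_lt (lt_of_le_of_lt this hf1)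
    have hEv : expectIID P.1 v ≤ R1 + δ := by
      have heq : expectIID P.1 v =
          expectIID P2 (fun w => (f1 w - entropy P2) ^ 2) :=
        expect_snd P.1 (fun w => (f1 w - entropy P2) ^ 2)
      rw [heq]
      have := le_ciSup (bddAbove_risk f1) (⟨P2, hP2pmf⟩ : {Q : Fin S → ℝ // IsPmf Q})
      exact le_of_lt (lt_of_le_of_lt this hf1)
    have hEt : expectIID P.1 t ≤ R2 + δ := by
      have := le_ciSup (bddAbove_risk f2) P
      exact le_of_lt (lt_of_le_of_lt this hf2)
    linarith
  have : 3 * (2 * (R1 + δ) + (R2 + δ)) = 3 * (2 * R1 + R2) + ε := by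
    rw [hδ]; ring
  linarith
end

section
/- (KL decomposition for tree-structured projections, underlying the Chow–Liu algorithm.) Let d ≥ 2, let X_1, …, X_d be finite nonempty alphabets, and let P be a pmf on X_1 × ⋯ × X_d with P(x) > 0 for all x. Let T be a rooted spanning tree on {1,…,d} with root r and parent map π (so π(i) is the parent of each i ≠ r). Define the tree projection Q_T(x) = P_{X_r}(x_r) · Π_{i ≠ r} P_{X_i | X_{π(i)}}(x_i | x_{π(i)}), where P_{X_i}, P_{X_i,X_j} denote the marginals of P and P_{X_i|X_j}(a|b) = P_{X_i,X_j}(a,b)/P_{X_j}(b). Then Q_T is a pmf on X_1 × ⋯ × X_d and D(P ‖ Q_T) = Σ_{i=1}^d H(P_{X_i}) − H(P) − Σ_{i ≠ r} I(P_{X_i, X_{π(i)}}). -/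
/-- Kullback–Leibler divergence `D(P ‖ Q) = Σ_{a : P(a) > 0} P(a) ln(P(a)/Q(a))`. -/
noncomputable def klDiv {A : Type*} [Fintype A] (P Q : A → ℝ) : ℝ :=
  ∑ a ∈ Finset.univ.filter (fun a => 0 < P a), P a * Real.log (P a / Q a)

/-- One-coordinate marginal `P_{X_i}` of a pmf `P` on a finite product. -/
noncomputable def marg {d : ℕ} {X : Fin d → Type*} [∀ i, Fintype (X i)]
    [∀ i, DecidableEq (X i)] (P : (∀ i, X i) → ℝ) (i : Fin d) : X i → ℝ :=
  fun a => ∑ x : ∀ j, X j, if x i = a then P x else 0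

/-- Two-coordinate marginal `P_{X_i, X_j}` of a pmf `P` on a finite product. -/
noncomputable def pairMarg {d : ℕ} {X : Fin d → Type*} [∀ i, Fintype (X i)]
    [∀ i, DecidableEq (X i)] (P : (∀ i, X i) → ℝ) (i j : Fin d) : X i × X j → ℝ :=
  fun p => ∑ x : ∀ j', X j', if x i = p.1 ∧ x j = p.2 then P x else 0

/-- Conditional pmf `P_{X_i | X_j}(a | b) = P_{X_i,X_j}(a,b) / P_{X_j}(b)`. -/
noncomputable def condProb {d : ℕ} {X : Fin d → Type*} [∀ i, Fintype (X i)]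
    [∀ i, DecidableEq (X i)] (P : (∀ i, X i) → ℝ) (i j : Fin d) (a : X i) (b : X j) : ℝ :=
  pairMarg P i j (a, b) / marg P j b

/-- The projection of `P` onto the rooted spanning tree with root `r` and parent map `π`:
`Q_T(x) = P_{X_r}(x_r) · Π_{i ≠ r} P_{X_i | X_{π(i)}}(x_i | x_{π(i)})`. -/
noncomputable def treeProj {d : ℕ} {X : Fin d → Type*} [∀ i, Fintype (X i)]
    [∀ i, DecidableEq (X i)] (P : (∀ i, X i) → ℝ) (r : Fin d) (π : Fin d → Fin d) :
    (∀ i, X i) → ℝ :=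
  fun x => marg P r (x r) *
    ∏ i ∈ Finset.univ.filter (fun i => i ≠ r), condProb P i (π i) (x i) (x (π i))

open Finset

section SumOut

variable {ι : Type*} [Fintype ι] [DecidableEq ι] {X : ι → Type*} [∀ i, Fintype (X i)]

theorem sum_eq_sum_weight_mul_sum_of_update_invariant (i : ι) (w : X i → ℝ)
    (hw : ∑ a, w a = 1) (H : (∀ j, X j) → X i → ℝ)
    (hH : ∀ x a, H (Function.update x i a) = H x) :
    ∑ x, H x (x i) = ∑ x, w (x i) * ∑ a, H x a := by
  -- `(x, a) ↦ (x[i ↦ a], x i)` is an involution exchanging the two sides.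
  let σ : Equiv.Perm ((∀ j, X j) × X i) :=
    Function.Involutive.toPerm (fun p => (Function.update p.1 i p.2, p.1 i)) fun p => by simp
  have hσ : ∀ x a, σ (x, a) = (Function.update x i a, x i) := fun _ _ => rfl
  calc ∑ x, H x (x i) = ∑ a, w a * ∑ x, H x (x i) := by rw [← sum_mul, hw, one_mul]
    _ = ∑ p : (∀ j, X j) × X i, w ((σ p).1 i) * H (σ p).1 (σ p).2 := by
      simp [hσ, hH, Fintype.sum_prod_type_right, mul_sum]
    _ = ∑ x, w (x i) * ∑ a, H x a := by
      rw [Equiv.sum_comp σ fun p => w (p.1 i) * H p.1 p.2, Fintype.sum_prod_type]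
      simp only [mul_sum]

theorem sum_prod_kernel_mul_prod_eq_one (π : ι → ι) (depth : ι → ℕ)
    (μ : ∀ i, X i → ℝ) (hμ : ∀ i, ∑ a, μ i a = 1) (κ : ∀ i, X i → X (π i) → ℝ) (S : Finset ι)
    (hdepth : ∀ i ∈ S, depth (π i) < depth i) (hκ : ∀ i ∈ S, ∀ b, ∑ a, κ i a b = 1) :
    ∑ x : ∀ i, X i, (∏ i ∈ S, κ i (x i) (x (π i))) * ∏ i ∈ Sᶜ, μ i (x i) = 1 := by
  induction S using Finset.induction_on_max_value depth with
  | empty => simp [← Fintype.prod_sum, hμ]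
  | insert i S hiS hmax ih =>
    -- `i` has maximal depth, so it is nobody's parent in `S` and `x i` occurs only in `κ i`.
    have hπi : π i ≠ i := fun h => (hdepth i (mem_insert_self i S)).ne (congrArg depth h)
    have hleaf : ∀ j ∈ S, π j ≠ i := fun j hj h =>
      (hmax j hj).not_gt (h ▸ hdepth j (mem_insert_of_mem hj))
    have hcompl : Sᶜ = insert i (insert i S)ᶜ := by
      ext j; by_cases hj : j = i <;> simp [hj, hiS]
    set G : (∀ j, X j) → ℝ := fun x =>
      (∏ j ∈ S, κ j (x j) (x (π j))) * ∏ j ∈ (insert i S)ᶜ, μ j (x j) with hG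
    have hGi : ∀ x (b : X i), G (Function.update x i b) = G x := by
      intro x b
      simp only [hG]
      congr 1
      · refine prod_congr rfl fun j hj => ?_
        rw [Function.update_of_ne (ne_of_mem_of_not_mem hj hiS),
          Function.update_of_ne (hleaf j hj)]
      · exact prod_congr rfl fun j hj => congrArg (μ j) <| Function.update_of_ne
          (fun h : j = i => mem_compl.mp hj (h ▸ mem_insert_self i S)) b x
    rw [← ih (fun j hj => hdepth j (mem_insert_of_mem hj))
      (fun j hj => hκ j (mem_insert_of_mem hj))]
    calc ∑ x : ∀ j, X j,
          (∏ j ∈ insert i S, κ j (x j) (x (π j))) * ∏ j ∈ (insert i S)ᶜ, μ j (x j)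
        = ∑ x, κ i (x i) (x (π i)) * G x := by
          simp only [prod_insert hiS, hG, mul_assoc]
      _ = ∑ x, μ i (x i) * ∑ a, κ i a (x (π i)) * G x :=
          sum_eq_sum_weight_mul_sum_of_update_invariant i (μ i) (hμ i)
            (fun x a => κ i a (x (π i)) * G x)
            fun x b => by simp only [Function.update_of_ne hπi, hGi]
      _ = ∑ x, μ i (x i) * G x := by
          simp only [← sum_mul, hκ i (mem_insert_self i S), one_mul]
      _ = _ := by
          simp only [hcompl, prod_insert (notMem_compl.mpr (mem_insert_self i S)), hG]
          exact sum_congr rfl fun x _ => by ring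

end SumOut

theorem exists_depth_lt_of_iterate_eq {α : Type*} (π : α → α) (r : α)
    (h : ∀ i, ∃ k, π^[k] i = r) : ∃ depth : α → ℕ, ∀ i, i ≠ r → depth (π i) < depth i := by
  classical
  refine ⟨fun i => Nat.find (h i), fun i hi => ?_⟩
  obtain ⟨k, hk⟩ := Nat.exists_eq_succ_of_ne_zero
    (fun h0 => hi (by simpa [h0] using Nat.find_spec (h i)) : Nat.find (h i) ≠ 0)
  have hk' : π^[k] (π i) = r := by
    rw [← Function.iterate_succ_apply, ← hk]
    exact Nat.find_spec (h i)
  have := Nat.find_min' (h (π i)) hk'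
  dsimp only
  omega

section Entropy

variable {α A : Type*} [Fintype α] [Fintype A]

theorem klDiv_eq_neg_entropy_sub (P Q : α → ℝ) (hP : ∀ a, 0 ≤ P a)
    (hQ : ∀ a, 0 < P a → Q a ≠ 0) :
    klDiv P Q = -entropy P - ∑ a, P a * Real.log (Q a) := by
  rw [klDiv, sum_filter, entropy, sum_neg_distrib, neg_neg, ← sum_sub_distrib]
  refine sum_congr rfl fun a _ => ?_
  split_ifs with ha
  · rw [Real.log_div ha.ne' (hQ a ha)]
    ring
  · simp [le_antisymm (not_lt.mp ha) (hP a)]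

theorem sum_mul_comp_eq_sum_fiber [DecidableEq A] (P : α → ℝ) (g : α → A) (f : A → ℝ) :
    ∑ x, P x * f (g x) = ∑ a, (∑ x, if g x = a then P x else 0) * f a := by
  simp only [sum_mul, ite_mul, zero_mul]
  rw [sum_comm]
  simp

theorem sum_mul_log_comp_eq_neg_entropy [DecidableEq A] (P : α → ℝ) (g : α → A) (Q : A → ℝ)
    (hQ : ∀ a, Q a = ∑ x, if g x = a then P x else 0) :
    ∑ x, P x * Real.log (Q (g x)) = -entropy Q := by
  rw [sum_mul_comp_eq_sum_fiber P g (fun a => Real.log (Q a)), entropy, sum_neg_distrib,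
    neg_neg]
  simp only [hQ]

end Entropy

section Marginals

variable {d : ℕ} {X : Fin d → Type*} [∀ i, Fintype (X i)] [∀ i, DecidableEq (X i)]
  (P : (∀ i, X i) → ℝ)

theorem sum_marg (i : Fin d) : ∑ a, marg P i a = ∑ x, P x := by
  simp only [marg]
  rw [sum_comm]
  simp

theorem sum_pairMarg_eq_marg_fst (i j : Fin d) (a : X i) :
    ∑ b, pairMarg P i j (a, b) = marg P i a := by
  simp only [pairMarg, marg]
  rw [sum_comm]
  refine sum_congr rfl fun x _ => ?_
  by_cases h : x i = a <;> simp [h]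

theorem sum_pairMarg_eq_marg_snd (i j : Fin d) (b : X j) :
    ∑ a, pairMarg P i j (a, b) = marg P j b := by
  simp only [pairMarg, marg]
  rw [sum_comm]
  refine sum_congr rfl fun x _ => ?_
  by_cases h : x j = b <;> simp [h]

theorem marg_pos [∀ i, Nonempty (X i)] (hP : ∀ x, 0 < P x) (i : Fin d) (a : X i) :
    0 < marg P i a := by
  refine sum_pos' (fun x _ => by split_ifs; exacts [(hP x).le, le_rfl]) ?_
  refine ⟨Function.update (fun j => Classical.arbitrary (X j)) i a, mem_univ _, ?_⟩
  rw [Function.update_self, if_pos rfl]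
  exact hP _

theorem pairMarg_pos [∀ i, Nonempty (X i)] (hP : ∀ x, 0 < P x) {i j : Fin d} (hij : i ≠ j)
    (a : X i) (b : X j) : 0 < pairMarg P i j (a, b) := by
  refine sum_pos' (fun x _ => by dsimp only; split_ifs; exacts [(hP x).le, le_rfl]) ?_
  refine ⟨Function.update (Function.update (fun k => Classical.arbitrary (X k)) j b) i a,
    mem_univ _, ?_⟩
  rw [if_pos ⟨Function.update_self .., by
    rw [Function.update_of_ne hij.symm, Function.update_self]⟩]
  exact hP _

theorem condProb_pos [∀ i, Nonempty (X i)] (hP : ∀ x, 0 < P x) {i j : Fin d} (hij : i ≠ j)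
    (a : X i) (b : X j) : 0 < condProb P i j a b :=
  div_pos (pairMarg_pos P hP hij a b) (marg_pos P hP j b)

theorem sum_condProb [∀ i, Nonempty (X i)] (hP : ∀ x, 0 < P x) (i j : Fin d) (b : X j) :
    ∑ a, condProb P i j a b = 1 := by
  simp only [condProb, ← sum_div, sum_pairMarg_eq_marg_snd, div_self (marg_pos P hP j b).ne']

theorem sum_mul_log_marg (i : Fin d) :
    ∑ x, P x * Real.log (marg P i (x i)) = -entropy (marg P i) :=
  sum_mul_log_comp_eq_neg_entropy P (· i) _ fun _ => rfl

theorem sum_mul_log_pairMarg (i j : Fin d) :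
    ∑ x, P x * Real.log (pairMarg P i j (x i, x j)) = -entropy (pairMarg P i j) :=
  sum_mul_log_comp_eq_neg_entropy P (fun x => (x i, x j)) _ fun _ => by
    simp only [pairMarg, Prod.ext_iff]

theorem mutualInfo_pairMarg (i j : Fin d) :
    mutualInfo (pairMarg P i j) =
      entropy (marg P i) + entropy (marg P j) - entropy (pairMarg P i j) := by
  simp only [mutualInfo, sum_pairMarg_eq_marg_fst, sum_pairMarg_eq_marg_snd]

end Marginals

section TreeProj

variable {d : ℕ} {X : Fin d → Type*} [∀ i, Fintype (X i)] [∀ i, DecidableEq (X i)]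
  [∀ i, Nonempty (X i)] (P : (∀ i, X i) → ℝ) (r : Fin d) (π : Fin d → Fin d)

theorem treeProj_pos (hP : ∀ x, 0 < P x) (hπ : ∀ i, i ≠ r → π i ≠ i) (x : ∀ i, X i) :
    0 < treeProj P r π x :=
  mul_pos (marg_pos P hP r _) <| prod_pos fun i hi =>
    condProb_pos P hP (hπ i (mem_filter.mp hi).2).symm _ _

theorem sum_treeProj (hP1 : ∑ x, P x = 1) (hP : ∀ x, 0 < P x)
    (htree : ∀ i, ∃ k, π^[k] i = r) : ∑ x, treeProj P r π x = 1 := by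
  obtain ⟨depth, hdepth⟩ := exists_depth_lt_of_iterate_eq π r htree
  have hroot : (univ.filter fun i => i ≠ r)ᶜ = {r} := by
    ext i; simp
  have := sum_prod_kernel_mul_prod_eq_one π depth (marg P) (fun i => (sum_marg P i).trans hP1)
    (fun i => condProb P i (π i)) (univ.filter fun i => i ≠ r)
    (fun i hi => hdepth i (mem_filter.mp hi).2) (fun i _ => sum_condProb P hP i (π i))
  simpa [hroot, treeProj, mul_comm] using this

theorem log_treeProj (hP : ∀ x, 0 < P x) (hπ : ∀ i, i ≠ r → π i ≠ i) (x : ∀ i, X i) :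
    Real.log (treeProj P r π x) = Real.log (marg P r (x r)) +
      ∑ i ∈ univ.filter (fun i => i ≠ r),
        (Real.log (pairMarg P i (π i) (x i, x (π i))) - Real.log (marg P (π i) (x (π i)))) := by
  have hcond : ∀ i ∈ univ.filter (fun i => i ≠ r), 0 < condProb P i (π i) (x i) (x (π i)) :=
    fun i hi => condProb_pos P hP (hπ i (mem_filter.mp hi).2).symm _ _
  rw [treeProj, Real.log_mul (marg_pos P hP r _).ne' (prod_pos hcond).ne',
    Real.log_prod fun i hi => (hcond i hi).ne']
  exact congrArg _ <| sum_congr rfl fun i hi => Real.log_div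
    (pairMarg_pos P hP (hπ i (mem_filter.mp hi).2).symm _ _).ne' (marg_pos P hP _ _).ne'

theorem sum_mul_log_treeProj (hP : ∀ x, 0 < P x) (hπ : ∀ i, i ≠ r → π i ≠ i) :
    ∑ x, P x * Real.log (treeProj P r π x) =
      ∑ i ∈ univ.filter (fun i => i ≠ r), mutualInfo (pairMarg P i (π i)) -
        ∑ i, entropy (marg P i) := by
  simp_rw [log_treeProj P r π hP hπ, mul_add, mul_sum, mul_sub]
  rw [sum_add_distrib, sum_comm]
  simp_rw [sum_sub_distrib, sum_mul_log_marg, sum_mul_log_pairMarg, mutualInfo_pairMarg]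
  rw [← add_sum_erase univ _ (mem_univ r), ← filter_ne']
  simp only [sum_sub_distrib, sum_add_distrib, sum_neg_distrib]
  ring

end TreeProj

theorem klDiv_treeProj_eq_general {d : ℕ} {X : Fin d → Type*}
    [∀ i, Fintype (X i)] [∀ i, Nonempty (X i)] [∀ i, DecidableEq (X i)]
    (P : (∀ i, X i) → ℝ) (hP1 : ∑ x, P x = 1) (hPpos : ∀ x, 0 < P x)
    (r : Fin d) (π : Fin d → Fin d)
    (htree : ∀ i : Fin d, ∃ k : ℕ, π^[k] i = r) :
    (∀ x, 0 ≤ treeProj P r π x) ∧ (∑ x, treeProj P r π x = 1) ∧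
    klDiv P (treeProj P r π) =
      (∑ i, entropy (marg P i)) - entropy P -
        ∑ i ∈ Finset.univ.filter (fun i => i ≠ r), mutualInfo (pairMarg P i (π i)) := by
  have hπ : ∀ i, i ≠ r → π i ≠ i := fun i hi hfix => hi <| by
    obtain ⟨k, hk⟩ := htree i
    rwa [Function.iterate_fixed hfix] at hk
  have hQ := treeProj_pos P r π hPpos hπ
  refine ⟨fun x => (hQ x).le, sum_treeProj P r π hP1 hPpos htree, ?_⟩
  rw [klDiv_eq_neg_entropy_sub P _ (fun x => (hPpos x).le) fun x _ => (hQ x).ne',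
    sum_mul_log_treeProj P r π hPpos hπ]
  ring

/-- KL decomposition for tree-structured projections (underlying the Chow–Liu algorithm):
`Q_T` is a pmf and
`D(P ‖ Q_T) = Σ_i H(P_{X_i}) − H(P) − Σ_{i ≠ r} I(P_{X_i, X_{π(i)}})`. -/
theorem klDiv_treeProj_eq {d : ℕ} (hd : 2 ≤ d) {X : Fin d → Type*}
    [∀ i, Fintype (X i)] [∀ i, Nonempty (X i)] [∀ i, DecidableEq (X i)]
    (P : (∀ i, X i) → ℝ) (hP1 : ∑ x, P x = 1) (hPpos : ∀ x, 0 < P x)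
    (r : Fin d) (π : Fin d → Fin d)
    (htree : ∀ i : Fin d, ∃ k : ℕ, π^[k] i = r) :
    (∀ x, 0 ≤ treeProj P r π x) ∧ (∑ x, treeProj P r π x = 1) ∧
    klDiv P (treeProj P r π) =
      (∑ i, entropy (marg P i)) - entropy P -
        ∑ i ∈ Finset.univ.filter (fun i => i ≠ r), mutualInfo (pairMarg P i (π i)) :=
  klDiv_treeProj_eq_general P hP1 hPpos r π htree
end
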